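/- If M is a subclass of an AEC K closed under the zigzag-equivalence relation ≡_K, then (M, ≼_K restricted to M) is again an AEC, and LS(M) ≤ LS(K). -/

import Mathlib

/-!
Every witness that an axiom of `K` produces from members of `M` (a strong substructure,
an isomorphic copy, the union of a directed system, an upper bound of it, a
Löwenheim–Skolem substructure) is linked to a member of `M` by a single `K`-embedding,
so it lies in `M` by `≡_K`-closure; hence each axiom of `K` restricts to `M` verbatim.
-/

open FirstOrder CategoryTheory Cardinal

/-- A bundled `L`-structure (an object of `L`-str). -/
structure Str (L : FirstOrder.Language.{0,0}) : Type 1 where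
  carrier : Type
  str : L.Structure carrier

attribute [instance] Str.str

variable {L : FirstOrder.Language.{0,0}}

namespace Str

/-- The bundled structure determined by a substructure `S` of `N`. -/
def sub (N : Str L) (S : L.Substructure N.carrier) : Str L := ⟨S, inferInstance⟩

end Str

/-- `f : M → N` is a `K`-embedding (with respect to the data of a class `mem` of structures
and a strong-substructure predicate `sle N S`, read "`S` is a `≼`-strong substructure of `N`"):
`f` factors as an isomorphism of `M` onto a strong substructure of `N` followed by the
inclusion of that substructure. -/
def IsKEmb (mem : Str L → Prop) (sle : ∀ N : Str L, L.Substructure N.carrier → Prop)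
    {M N : Str L} (f : M.carrier ↪[L] N.carrier) : Prop :=
  mem M ∧ mem N ∧ ∃ (S : L.Substructure N.carrier) (e : M.carrier ≃[L] (N.sub S).carrier),
    sle N S ∧ ⇑f = Subtype.val ∘ ⇑e

/-- One step of a zigzag: a `K`-embedding in one of the two directions. -/
def ZigStep (mem : Str L → Prop) (sle : ∀ N : Str L, L.Substructure N.carrier → Prop)
    (M N : Str L) : Prop :=
  (∃ f : M.carrier ↪[L] N.carrier, IsKEmb mem sle f) ∨
  (∃ f : N.carrier ↪[L] M.carrier, IsKEmb mem sle f)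

/-- `M ≡_K N` : `M` and `N` are connected by a finite zigzag of `K`-embeddings. -/
def Conn (mem : Str L → Prop) (sle : ∀ N : Str L, L.Substructure N.carrier → Prop)
    (M N : Str L) : Prop :=
  Relation.ReflTransGen (ZigStep mem sle) M N

/-- An abstract elementary class in the language `L`, presented by the class `mem` of its
members, the strong-substructure predicate `sle`, and an explicit Löwenheim–Skolem
bound `lsBound`.  The axioms are: order, isomorphism-closure, coherence,
unions of directed systems (with minimality below upper bounds), and Löwenheim–Skolem. -/
structure AEC (L : FirstOrder.Language.{0,0}) : Type 1 where
  mem : Str L → Prop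
  sle : ∀ N : Str L, L.Substructure N.carrier → Prop
  lsBound : Cardinal.{0}
  lsBound_infinite : ℵ₀ ≤ lsBound
  sle_mem_left : ∀ {N S}, sle N S → mem (N.sub S)
  sle_mem_right : ∀ {N S}, sle N S → mem N
  refl : ∀ {N}, mem N → sle N ⊤
  /-- transitivity of `≼`: a strong substructure of a strong substructure is strong -/
  strans : ∀ {N : Str L} {S : L.Substructure N.carrier}
    (T : L.Substructure (N.sub S).carrier),
    sle N S → sle (N.sub S) T → sle N (T.map S.subtype.toHom)
  /-- coherence: `M ⊆ N ⊆ P`, `M ≼ P`, `N ≼ P` imply `M ≼ N` -/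
  coherence : ∀ {N : Str L} {S S' : L.Substructure N.carrier}, S ≤ S' →
    sle N S → sle N S' → sle (N.sub S') (S.comap S'.subtype.toHom)
  /-- closure of the class under isomorphism -/
  iso_mem : ∀ {M N : Str L}, mem M → (M.carrier ≃[L] N.carrier) → mem N
  /-- the isomorphism axiom for `≼`: images of strong substructures under isomorphisms
  of the ambient structures are strong -/
  iso_sle : ∀ {N N' : Str L} (g : N.carrier ≃[L] N'.carrier)
    (S : L.Substructure N.carrier), sle N S → sle N' (S.map g.toEmbedding.toHom)
  /-- the union-of-chains (reunion) axiom, stated for directed systems of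
  `K`-embeddings: the union (directed colimit) exists in `K`, lies above every member of
  the system, and is below every upper bound of the system -/
  chain_sup : ∀ {J : Type} [Preorder J] [Nonempty J], IsDirected J (· ≤ ·) →
    ∀ (D : J → Str L) (t : ∀ i j : J, i ≤ j → ((D i).carrier ↪[L] (D j).carrier)),
      (∀ i j h, IsKEmb mem sle (t i j h)) →
      (∀ (i j k : J) (hij : i ≤ j) (hjk : j ≤ k),
        (t j k hjk).comp (t i j hij) = t i k (le_trans hij hjk)) →
      ∃ (Msup : Str L) (u : ∀ i, (D i).carrier ↪[L] Msup.carrier),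
        (∀ i, IsKEmb mem sle (u i)) ∧
        (∀ i j (hij : i ≤ j), (u j).comp (t i j hij) = u i) ∧
        ∀ (P : Str L) (v : ∀ i, (D i).carrier ↪[L] P.carrier),
          (∀ i, IsKEmb mem sle (v i)) → (∀ i j (hij : i ≤ j), (v j).comp (t i j hij) = v i) →
          ∃ w : Msup.carrier ↪[L] P.carrier, IsKEmb mem sle w ∧ ∀ i, w.comp (u i) = v i
  /-- Löwenheim–Skolem: every subset of a member is contained in a strong substructure
  of cardinality at most `#X + lsBound` -/
  ls : ∀ N, mem N → ∀ X : Set N.carrier,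
    ∃ S : L.Substructure N.carrier, sle N S ∧ X ⊆ (S : Set N.carrier) ∧ #S ≤ #X + lsBound

section KEmb

variable {mem : Str L → Prop} {sle : ∀ N : Str L, L.Substructure N.carrier → Prop}
  {M N : Str L} {f : M.carrier ↪[L] N.carrier}

theorem IsKEmb.mono {mem' : Str L → Prop} {sle' : ∀ N : Str L, L.Substructure N.carrier → Prop}
    (hmem : ∀ M, mem M → mem' M) (hsle : ∀ N S, sle N S → sle' N S)
    (hf : IsKEmb mem sle f) : IsKEmb mem' sle' f :=
  let ⟨hM, hN, S, e, hS, hfe⟩ := hf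
  ⟨hmem _ hM, hmem _ hN, S, e, hsle _ _ hS, hfe⟩

theorem IsKEmb.restrict {P : Str L → Prop} (hf : IsKEmb mem sle f) (hM : P M) (hN : P N) :
    IsKEmb P (fun N S => sle N S ∧ P N) f :=
  let ⟨_, _, S, e, hS, hfe⟩ := hf
  ⟨hM, hN, S, e, ⟨hS, hN⟩, hfe⟩

theorem IsKEmb.conn (hf : IsKEmb mem sle f) : Conn mem sle M N :=
  .single (.inl ⟨f, hf⟩)

theorem IsKEmb.conn_symm (hf : IsKEmb mem sle f) : Conn mem sle N M :=
  .single (.inr ⟨f, hf⟩)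

end KEmb

namespace AEC

variable (A : AEC L)

theorem isKEmb_subtype {N : Str L} {S : L.Substructure N.carrier} (hS : A.sle N S) :
    IsKEmb A.mem A.sle (M := N.sub S) S.subtype :=
  ⟨A.sle_mem_left hS, A.sle_mem_right hS, S, .refl L _, hS, rfl⟩

theorem isKEmb_equiv {M N : Str L} (hM : A.mem M) (g : M.carrier ≃[L] N.carrier) :
    IsKEmb A.mem A.sle g.toEmbedding :=
  have hN : A.mem N := A.iso_mem hM g
  ⟨hM, hN, ⊤, (Language.Substructure.topEquiv (M := N.carrier)).symm.comp g, A.refl hN, rfl⟩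

section Closed

variable {A} {P : Str L → Prop}
  (hclosed : ∀ M N : Str L, P M → Conn A.mem A.sle M N → P N)
include hclosed

theorem closed_sub_of_sle {N : Str L} {S : L.Substructure N.carrier} (hN : P N)
    (hS : A.sle N S) : P (N.sub S) :=
  hclosed _ _ hN (A.isKEmb_subtype hS).conn_symm

theorem closed_of_equiv (hsub : ∀ M, P M → A.mem M) {M N : Str L} (hM : P M)
    (g : M.carrier ≃[L] N.carrier) : P N :=
  hclosed _ _ hM (A.isKEmb_equiv (hsub _ hM) g).conn

end Closed

def restrict (P : Str L → Prop) (hsub : ∀ M, P M → A.mem M)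
    (hclosed : ∀ M N : Str L, P M → Conn A.mem A.sle M N → P N) : AEC L where
  mem := P
  sle N S := A.sle N S ∧ P N
  lsBound := A.lsBound
  lsBound_infinite := A.lsBound_infinite
  sle_mem_left h := closed_sub_of_sle hclosed h.2 h.1
  sle_mem_right h := h.2
  refl h := ⟨A.refl (hsub _ h), h⟩
  strans T hS hT := ⟨A.strans T hS.1 hT.1, hS.2⟩
  coherence hle hS hS' := ⟨A.coherence hle hS.1 hS'.1, closed_sub_of_sle hclosed hS'.2 hS'.1⟩
  iso_mem hM g := closed_of_equiv hclosed hsub hM g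
  iso_sle g S hS := ⟨A.iso_sle g S hS.1, closed_of_equiv hclosed hsub hS.2 g⟩
  chain_sup := by
    intro J _ _ hdir D t ht hcomp
    have toA : ∀ {M N : Str L} {f : M.carrier ↪[L] N.carrier},
        IsKEmb P (fun N S => A.sle N S ∧ P N) f → IsKEmb A.mem A.sle f :=
      IsKEmb.mono hsub fun _ _ h => h.1
    obtain ⟨Msup, u, hu, hcommute, hmin⟩ := A.chain_sup hdir D t (fun i j h => toA (ht i j h)) hcomp
    have hD : ∀ i, P (D i) := fun i => (ht i i le_rfl).1
    have i₀ : J := Classical.arbitrary J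
    have hMsup : P Msup := hclosed _ _ (hD i₀) (hu i₀).conn
    refine ⟨Msup, u, fun i => (hu i).restrict (hD i) hMsup, hcommute, ?_⟩
    intro Q v hv hvcomm
    obtain ⟨w, hw, hwu⟩ := hmin Q v (fun i => toA (hv i)) hvcomm
    exact ⟨w, hw.restrict hMsup (hv i₀).2.1, hwu⟩
  ls N hN X :=
    let ⟨S, hS, hX, hcard⟩ := A.ls N (hsub _ hN) X
    ⟨S, ⟨hS, hN⟩, hX, hcard⟩

end AEC

/-- A subclass `P ⊆ K` closed under the zigzag-equivalence `≡_K` is,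
with the restricted strong-substructure relation, again an AEC, with `LS(P) ≤ LS(K)`. -/
theorem gElementary_subclass_is_AEC (A : AEC L) (P : Str L → Prop)
    (hsub : ∀ M, P M → A.mem M)
    (hclosed : ∀ M N : Str L, P M → Conn A.mem A.sle M N → P N) :
    ∃ A' : AEC L, A'.mem = P ∧ (A'.sle = fun N S => A.sle N S ∧ P N) ∧
      A'.lsBound = A.lsBound :=
  ⟨A.restrict P hsub hclosed, rfl, rfl, rfl⟩
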